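/- Theorem (CPNs simulate MPBNs), backward direction: Let f be a BN of dimension n and x, y ∈ B^n. If ⟨y⟩ is lim-reachable from ⟨x⟩ in the continuous Petri net N(f), then x →*_{mp} y in the most permissive semantics of f. -/

import Mathlib

open Relation Filter

/-! ### Boolean networks and their semantics -/

abbrev Config (n : ℕ) := Fin n → Bool
abbrev BN (n : ℕ) := Config n → Fin n → Bool

def Delta {n : ℕ} (x y : Config n) : Set (Fin n) := {i | x i ≠ y i}

def fa {n : ℕ} (f : BN n) (x y : Config n) : Prop :=
  ∃ i, Delta x y = {i} ∧ f x i = y i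

def syn {n : ℕ} (f : BN n) (x y : Config n) : Prop := ∀ i, f x i = y i

def ga {n : ℕ} (f : BN n) (x y : Config n) : Prop := ∀ i ∈ Delta x y, f x i = y i

/-! ### Most permissive semantics -/

inductive MPV where
  | b : Bool → MPV
  | up : MPV
  | down : MPV
deriving DecidableEq

abbrev MPConfig (n : ℕ) := Fin n → MPV

def toMP {n : ℕ} (x : Config n) : MPConfig n := fun i => .b (x i)

def beta {n : ℕ} (xh : MPConfig n) : Set (Config n) :=
  {x | ∀ i v, xh i = .b v → x i = v}

def mpStep {n : ℕ} (f : BN n) (xh yh : MPConfig n) : Prop :=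
  ∃ i, (∀ j, j ≠ i → xh j = yh j) ∧ xh i ≠ yh i ∧
    ((xh i = .up ∧ yh i = .b true) ∨
     (xh i = .down ∧ yh i = .b false) ∨
     (xh i ≠ .b true ∧ yh i = .up ∧ ∃ x ∈ beta xh, f x i = true) ∨
     (xh i ≠ .b false ∧ yh i = .down ∧ ∃ x ∈ beta xh, f x i = false))

def mp {n : ℕ} (f : BN n) (x y : Config n) : Prop :=
  ReflTransGen (mpStep f) (toMP x) (toMP y)

/-! ### Petri nets (discrete and continuous) -/

structure Net (P T : Type) where
  wPT : P → T → ℕ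
  wTP : T → P → ℕ

def dfire {P T : Type} (N : Net P T) (t : T) (M M' : P → ℕ) : Prop :=
  (∀ p, N.wPT p t ≤ M p) ∧ ∀ p, M' p = M p - N.wPT p t + N.wTP t p

def dReach {P T : Type} (N : Net P T) : (P → ℕ) → (P → ℕ) → Prop :=
  ReflTransGen (fun M M' => ∃ t, dfire N t M M')

def cfire {P T : Type} (N : Net P T) (t : T) (α : ℝ) (m m' : P → ℝ) : Prop :=
  0 ≤ α ∧ (∀ p, α * N.wPT p t ≤ m p) ∧
    ∀ p, m' p = m p - α * N.wPT p t + α * N.wTP t p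

def cReach {P T : Type} (N : Net P T) : (P → ℝ) → (P → ℝ) → Prop :=
  ReflTransGen (fun m m' => ∃ t α, cfire N t α m m')

def limReach {P T : Type} (N : Net P T) (m m' : P → ℝ) : Prop :=
  ∃ ms : ℕ → P → ℝ, ms 0 = m ∧
    (∀ k, ∃ t α, cfire N t α (ms k) (ms (k+1))) ∧
    Tendsto ms atTop (nhds m')

def IsTrap {P T : Type} (N : Net P T) (S : Set P) : Prop :=
  ∀ t, (∃ p ∈ S, 0 < N.wPT p t) → ∃ p ∈ S, 0 < N.wTP t p

def enabPos {P T : Type} (N : Net P T) (t : T) (m : P → ℝ) : Prop :=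
  ∀ p, 0 < N.wPT p t → 0 < m p

def enabGe {P T : Type} (N : Net P T) (t : T) (m : P → ℝ) (c : ℝ) : Prop :=
  ∀ p, 0 < N.wPT p t → c * N.wPT p t ≤ m p

/-! ### Petri net encoding of Boolean networks -/

abbrev Clause (n : ℕ) := Fin n → Option Bool

def satC {n : ℕ} (z : Config n) (C : Clause n) : Prop :=
  ∀ j v, C j = some v → z j = v

structure ETrans (n : ℕ) where
  i : Fin n
  s : Bool
  C : Clause n

abbrev EPlace (n : ℕ) := Fin n × Bool

def encNet (n : ℕ) : Net (EPlace n) (ETrans n) where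
  wPT := fun p t =>
    if p.1 = t.i then (if p.2 = !t.s then 1 else 0)
    else (if t.C p.1 = some p.2 then 1 else 0)
  wTP := fun t p =>
    if p.1 = t.i then (if p.2 = t.s then 1 else 0)
    else (if t.C p.1 = some p.2 then 1 else 0)

def mu {n : ℕ} (xh : MPConfig n) : Set (EPlace n → ℝ) :=
  {m | (∀ p, 0 ≤ m p) ∧ ∀ i,
    m (i, false) + m (i, true) = 1 ∧
    (∀ v, xh i = .b v → m (i, v) = 1) ∧
    ((xh i = .up ∨ xh i = .down) →
      0 < m (i, false) ∧ m (i, false) < 1 ∧ 0 < m (i, true) ∧ m (i, true) < 1)}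

noncomputable def canon {n : ℕ} (xh : MPConfig n) : EPlace n → ℝ := fun p =>
  match xh p.1 with
  | .b v => if p.2 = v then 1 else 0
  | _ => 1/2

def validT {n : ℕ} (D : Fin n → Bool → Set (Clause n)) (t : ETrans n) : Prop :=
  t.C ∈ D t.i t.s

def IsDNF {n : ℕ} (f : BN n) (D : Fin n → Bool → Set (Clause n)) : Prop :=
  (∀ i s z, (∃ C ∈ D i s, satC z C) ↔ (z i = !s ∧ f z i = s)) ∧
  (∀ i s C, C ∈ D i s → C i = some (!s))

def cReachG {P T : Type} (N : Net P T) (good : T → Prop) :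
    (P → ℝ) → (P → ℝ) → Prop :=
  ReflTransGen (fun m m' => ∃ t, good t ∧ ∃ α, cfire N t α m m')

def climReachG {P T : Type} (N : Net P T) (good : T → Prop) (m m' : P → ℝ) : Prop :=
  ∃ ms : ℕ → P → ℝ, ms 0 = m ∧
    (∀ k, ∃ t, good t ∧ ∃ α, cfire N t α (ms k) (ms (k+1))) ∧
    Tendsto ms atTop (nhds m')

/-! The run of the continuous net is shadowed by an MP trajectory: each firing with positive
amount at variable `i` towards `s` is mirrored by the MP move of `i` to the transient value
`toward s`. The marking stays compatible with the MP configuration (Boolean values carry a full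
token, a transient value towards `s` leaves strictly less than one token on `(i, !s)`), and a
compatible marking enabling a transition of the encoding yields the witness this MP move needs.
Since the marking converges to `⟨y⟩`, late in the run every variable either has been Boolean all
along (then equal to `y i`), or rests at `toward (y i)`, or keeps firing towards `y i`; from such a
late configuration the variables still away from `y` move towards `y` and then collapse onto it. -/

open Function

theorem reflTransGen_of_forall_update {ι α : Type*} [Fintype ι] [DecidableEq ι]
    {r : (ι → α) → (ι → α) → Prop} {v w : ι → α}
    (h : ∀ u : ι → α, (∀ j, u j = v j ∨ u j = w j) → ∀ i, u i = v i →
      ReflTransGen r u (update u i (w i))) :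
    ReflTransGen r v w := by
  suffices hS : ∀ S : Finset ι, ReflTransGen r v (S.piecewise w v) by
    simpa using hS Finset.univ
  intro S
  induction S using Finset.induction_on with
  | empty => rw [Finset.piecewise_empty]
  | insert a S ha ih =>
    rw [Finset.piecewise_insert]
    refine ih.trans (h _ (fun j => ?_) a (Finset.piecewise_eq_of_notMem _ _ _ ha))
    by_cases hj : j ∈ S
    · exact Or.inr (Finset.piecewise_eq_of_mem _ _ _ hj)
    · exact Or.inl (Finset.piecewise_eq_of_notMem _ _ _ hj)

namespace MPV

def toward : Bool → MPV
  | true => .up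
  | false => .down

theorem toward_ne_b (s v : Bool) : toward s ≠ .b v := by
  cases s <;> simp [toward]

theorem toward_injective : Injective toward := by
  intro s s' h
  cases s <;> cases s' <;> simp_all [toward]

theorem exists_eq_toward {a : MPV} (h : ∀ v, a ≠ .b v) : ∃ s, a = toward s := by
  rcases a with v | _ | _
  · exact absurd rfl (h v)
  · exact ⟨true, rfl⟩
  · exact ⟨false, rfl⟩

/-- Arbitrary on transient values. -/
def someBool : MPV → Bool
  | .b v => v
  | _ => true

end MPV

section MostPermissive

variable {n : ℕ} {f : BN n}

theorem beta_subset_beta {u v : MPConfig n} (h : ∀ i w, u i = .b w → v i = .b w) :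
    beta v ⊆ beta u :=
  fun _ hz i w hu => hz i w (h i w hu)

theorem reflTransGen_mpStep_update_toward {u : MPConfig n} {i : Fin n} {s : Bool}
    (hu : u i ≠ .b s) (hz : ∃ z ∈ beta u, f z i = s) :
    ReflTransGen (mpStep f) u (update u i (.toward s)) := by
  by_cases heq : u i = .toward s
  · rw [← heq, update_eq_self]
  refine .single ⟨i, fun j hj => (update_of_ne hj _ _).symm, by simpa [eq_comm] using heq, ?_⟩
  rw [update_self]
  cases s
  · exact .inr (.inr (.inr ⟨hu, rfl, hz⟩))
  · exact .inr (.inr (.inl ⟨hu, rfl, hz⟩))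

theorem mpStep_update_b_of_eq_toward {u : MPConfig n} {i : Fin n} {s : Bool}
    (hu : u i = .toward s) : mpStep f u (update u i (.b s)) := by
  refine ⟨i, fun j hj => (update_of_ne hj _ _).symm, ?_, ?_⟩ <;> rw [update_self, hu]
  · exact MPV.toward_ne_b s s
  · cases s
    · exact .inr (.inl ⟨rfl, rfl⟩)
    · exact .inl ⟨rfl, rfl⟩

/-- The variables not yet at `y` first all move to `toward (y i)`, while the Boolean part, hence
the witnesses, is unchanged; only then do they collapse onto `y`. -/
theorem reflTransGen_mpStep_toMP {V : MPConfig n} {y : Config n}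
    (h : ∀ i, V i = .b (y i) ∨
      (∀ v, V i ≠ .b v) ∧ (V i = .toward (y i) ∨ ∃ z ∈ beta V, f z i = y i)) :
    ReflTransGen (mpStep f) V (toMP y) := by
  classical
  let W : MPConfig n := fun i => if V i = .b (y i) then .b (y i) else .toward (y i)
  have hVW : ReflTransGen (mpStep f) V W := by
    refine reflTransGen_of_forall_update fun u hu i hui => ?_
    by_cases hb : V i = .b (y i)
    · rw [show W i = u i by simp [W, hb, hui], update_eq_self]
    obtain ⟨hnb, htw | ⟨z, hz, hfz⟩⟩ := (h i).resolve_left hb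
    · rw [show W i = u i by simp only [W, if_neg hb, hui, htw], update_eq_self]
    have hVu : ∀ j w, u j = .b w → V j = .b w := by
      intro j w huj
      rcases hu j with hj | hj
      · rwa [← hj]
      · by_cases hbj : V j = .b (y j)
        · simp only [W, if_pos hbj] at hj
          rw [hbj, ← huj, hj]
        · simp only [W, if_neg hbj] at hj
          exact absurd (hj.symm.trans huj) (MPV.toward_ne_b _ _)
    simpa [W, hb] using
      reflTransGen_mpStep_update_toward (hui ▸ hnb (y i)) ⟨z, beta_subset_beta hVu hz, hfz⟩
  refine hVW.trans (reflTransGen_of_forall_update fun u _ i hui => ?_)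
  by_cases hb : V i = .b (y i)
  · rw [show toMP y i = u i by simp [toMP, hui, W, hb], update_eq_self]
  · exact .single (mpStep_update_b_of_eq_toward (by simp [hui, W, hb]))

end MostPermissive

theorem cfire_nonneg {P T : Type} {N : Net P T} {t : T} {α : ℝ} {m m' : P → ℝ}
    (hf : cfire N t α m m') (p : P) : 0 ≤ m' p := by
  obtain ⟨hα, hle, heq⟩ := hf
  rw [heq p]
  have := hle p
  positivity

theorem cfire_zero {P T : Type} {N : Net P T} {t : T} {m m' : P → ℝ}
    (hf : cfire N t 0 m m') : m' = m := by
  funext p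
  simp [hf.2.2 p]

theorem cfire_pos_of_wPT_pos {P T : Type} {N : Net P T} {t : T} {α : ℝ} {m m' : P → ℝ}
    (hf : cfire N t α m m') (hα : 0 < α) {p : P} (hp : 0 < N.wPT p t) : 0 < m p :=
  (mul_pos hα (by exact_mod_cast hp)).trans_le (hf.2.1 p)

section Encoding

variable {n : ℕ} {t : ETrans n} {α : ℝ} {m m' : EPlace n → ℝ}

theorem encNet_cfire_apply_of_ne (hf : cfire (encNet n) t α m m') {j : Fin n} (hj : j ≠ t.i)
    (v : Bool) : m' (j, v) = m (j, v) := by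
  simp [hf.2.2 (j, v), encNet, hj]

theorem encNet_cfire_apply_self (hf : cfire (encNet n) t α m m') :
    m' (t.i, t.s) = m (t.i, t.s) + α := by
  cases hs : t.s <;> simp [hf.2.2, encNet, hs]

theorem encNet_cfire_apply_not (hf : cfire (encNet n) t α m m') :
    m' (t.i, !t.s) = m (t.i, !t.s) - α := by
  cases hs : t.s <;> simp [hf.2.2, encNet, hs]

theorem encNet_cfire_le (hf : cfire (encNet n) t α m m') {i : Fin n} {s : Bool}
    (h : ¬(t.i = i ∧ t.s = s ∧ 0 < α)) : m' (i, s) ≤ m (i, s) := by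
  by_cases hi : i = t.i
  · subst hi
    by_cases hs : t.s = s
    · subst hs
      have : α ≤ 0 := by simpa using h
      linarith [encNet_cfire_apply_self hf]
    · rw [Bool.eq_not.mpr (Ne.symm hs), encNet_cfire_apply_not hf]
      linarith [hf.1]
  · rw [encNet_cfire_apply_of_ne hf hi]

/-- At `t.i` the clause of a valid `t` asks for exactly the place `(t.i, !t.s)` that `t`
consumes there. -/
theorem encNet_wPT_of_validT {f : BN n} {D : Fin n → Bool → Set (Clause n)} (hD : IsDNF f D)
    (ht : validT D t) (p : EPlace n) :
    (encNet n).wPT p t = if t.C p.1 = some p.2 then 1 else 0 := by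
  obtain ⟨j, v⟩ := p
  by_cases hj : j = t.i
  · subst hj
    simp [encNet, hD.2 _ _ _ ht, eq_comm]
  · simp [encNet, hj]

end Encoding

/-- A weakening of `mu`: a transient value `toward s` only bounds the token on `(i, !s)` away
from `1`, which survives firing `t` all the way down to `(t.i, !t.s)` being empty. -/
structure Compatible {n : ℕ} (vh : MPConfig n) (m : EPlace n → ℝ) : Prop where
  nonneg : ∀ p, 0 ≤ m p
  add_not : ∀ i v, m (i, v) + m (i, !v) = 1
  eq_one_of_eq_b : ∀ i v, vh i = .b v → m (i, v) = 1
  lt_one_of_eq_toward : ∀ i s, vh i = .toward s → m (i, !s) < 1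

theorem compatible_canon {n : ℕ} (vh : MPConfig n) : Compatible vh (canon vh) where
  nonneg := by
    rintro ⟨i, v⟩
    unfold canon
    split <;> (try split) <;> norm_num
  add_not := by
    intro i v
    rcases h : vh i with u | _ | _ <;> cases v <;> (try cases u) <;>
      simp [canon, h] <;> norm_num
  eq_one_of_eq_b := by
    intro i v h
    simp [canon, h]
  lt_one_of_eq_toward := by
    intro i s h
    cases s <;> simp [canon, h, MPV.toward] <;> norm_num

namespace Compatible

variable {n : ℕ} {vh : MPConfig n} {m m' : EPlace n → ℝ} {t : ETrans n} {α : ℝ}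

theorem le_one (hc : Compatible vh m) (i : Fin n) (v : Bool) : m (i, v) ≤ 1 := by
  linarith [hc.add_not i v, hc.nonneg (i, !v)]

theorem eq_zero_of_eq_b (hc : Compatible vh m) {i : Fin n} {v : Bool} (h : vh i = .b v) :
    m (i, !v) = 0 := by
  linarith [hc.add_not i v, hc.eq_one_of_eq_b i v h]

theorem update_toward (hc : Compatible vh m) (hf : cfire (encNet n) t α m m') (hα : 0 < α) :
    Compatible (update vh t.i (.toward t.s)) m' where
  nonneg := cfire_nonneg hf
  add_not := by
    intro i v
    by_cases hi : i = t.i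
    · subst hi
      have := hc.add_not t.i t.s
      obtain rfl | rfl : v = t.s ∨ v = !t.s := by cases v <;> cases t.s <;> simp
      · rw [encNet_cfire_apply_self hf, encNet_cfire_apply_not hf]
        linarith
      · rw [Bool.not_not, encNet_cfire_apply_self hf, encNet_cfire_apply_not hf]
        linarith
    · rw [encNet_cfire_apply_of_ne hf hi, encNet_cfire_apply_of_ne hf hi, hc.add_not]
  eq_one_of_eq_b := by
    intro i v h
    by_cases hi : i = t.i
    · subst hi
      exact absurd h (by simpa using MPV.toward_ne_b _ _)
    · rw [update_of_ne hi] at h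
      rw [encNet_cfire_apply_of_ne hf hi, hc.eq_one_of_eq_b i v h]
  lt_one_of_eq_toward := by
    intro i s h
    by_cases hi : i = t.i
    · subst hi
      obtain rfl := MPV.toward_injective (by simpa using h.symm)
      linarith [encNet_cfire_apply_not hf, hc.le_one t.i (!t.s)]
    · rw [update_of_ne hi] at h
      rw [encNet_cfire_apply_of_ne hf hi]
      exact hc.lt_one_of_eq_toward i s h

end Compatible

theorem Compatible.exists_beta_of_cfire {n : ℕ} {f : BN n} {D : Fin n → Bool → Set (Clause n)}
    (hD : IsDNF f D) {vh : MPConfig n} {m m' : EPlace n → ℝ} {t : ETrans n} {α : ℝ}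
    (hc : Compatible vh m) (ht : validT D t) (hf : cfire (encNet n) t α m m') (hα : 0 < α) :
    vh t.i ≠ .b t.s ∧ ∃ z ∈ beta vh, f z t.i = t.s := by
  have hclause : ∀ j u w, vh j = .b u → t.C j = some w → w = u := by
    intro j u w hu hw
    by_contra hne
    have hpos := cfire_pos_of_wPT_pos hf hα (p := (j, w))
      (by simp [encNet_wPT_of_validT hD ht, hw])
    rw [Bool.eq_not.mpr hne, hc.eq_zero_of_eq_b hu] at hpos
    exact lt_irrefl 0 hpos
  refine ⟨fun h => ?_, fun j => (t.C j).getD (vh j).someBool, ?_, ?_⟩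
  · simpa using hclause _ _ _ h (hD.2 _ _ _ ht)
  · intro j u hu
    cases hw : t.C j with
    | none => simp [hw, hu, MPV.someBool]
    | some w => simpa [hw] using hclause j u w hu hw
  · refine ((hD.1 t.i t.s _).mp ⟨t.C, ht, fun j v hv => ?_⟩).2
    simp [hv]

noncomputable def mpTrace {n : ℕ} (v₀ : MPConfig n) (tk : ℕ → ETrans n) (ak : ℕ → ℝ) :
    ℕ → MPConfig n
  | 0 => v₀
  | k + 1 => if 0 < ak k then update (mpTrace v₀ tk ak k) (tk k).i (.toward (tk k).s)
      else mpTrace v₀ tk ak k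

section Trace

variable {n : ℕ} {v₀ : MPConfig n} {tk : ℕ → ETrans n} {ak : ℕ → ℝ}

theorem mpTrace_succ_eq_b {k : ℕ} {i : Fin n} {v : Bool}
    (h : mpTrace v₀ tk ak (k + 1) i = .b v) : mpTrace v₀ tk ak k i = .b v := by
  simp only [mpTrace] at h
  split_ifs at h
  · by_cases hi : i = (tk k).i
    · subst hi
      exact absurd h (by simpa using MPV.toward_ne_b _ _)
    · rwa [update_of_ne hi] at h
  · exact h

theorem mpTrace_eq_b_of_le {k k' : ℕ} (hk : k ≤ k') {i : Fin n} {v : Bool}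
    (h : mpTrace v₀ tk ak k' i = .b v) : mpTrace v₀ tk ak k i = .b v := by
  induction k', hk using Nat.le_induction with
  | base => exact h
  | succ k' _ ih => exact ih (mpTrace_succ_eq_b h)

theorem exists_forall_mpTrace_eq_b {i : Fin n}
    (h : ∃ᶠ k in atTop, ∃ v, mpTrace v₀ tk ak k i = .b v) :
    ∃ v, ∀ k, mpTrace v₀ tk ak k i = .b v := by
  obtain ⟨k₀, -, v, hv⟩ := frequently_atTop.mp h 0
  refine ⟨v, fun k => ?_⟩
  obtain ⟨k', hk', v', hv'⟩ := frequently_atTop.mp h k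
  obtain rfl : v' = v := by
    simpa [mpTrace_eq_b_of_le (Nat.zero_le k₀) hv, eq_comm] using
      mpTrace_eq_b_of_le (Nat.zero_le k') hv'
  exact mpTrace_eq_b_of_le hk' hv'

variable {ms : ℕ → EPlace n → ℝ}

theorem compatible_mpTrace (hfire : ∀ k, cfire (encNet n) (tk k) (ak k) (ms k) (ms (k + 1)))
    (h₀ : Compatible v₀ (ms 0)) :
    ∀ k, Compatible (mpTrace v₀ tk ak k) (ms k)
  | 0 => h₀
  | k + 1 => by
    simp only [mpTrace]
    split_ifs with hα
    · exact (compatible_mpTrace hfire h₀ k).update_toward (hfire k) hα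
    · have hzero := hfire k
      rw [le_antisymm (not_lt.mp hα) hzero.1] at hzero
      rw [cfire_zero hzero]
      exact compatible_mpTrace hfire h₀ k

theorem reflTransGen_mpTrace {f : BN n} {D : Fin n → Bool → Set (Clause n)} (hD : IsDNF f D)
    (hvalid : ∀ k, validT D (tk k))
    (hfire : ∀ k, cfire (encNet n) (tk k) (ak k) (ms k) (ms (k + 1)))
    (hc : ∀ k, Compatible (mpTrace v₀ tk ak k) (ms k)) :
    ∀ k, ReflTransGen (mpStep f) v₀ (mpTrace v₀ tk ak k)
  | 0 => .refl
  | k + 1 => by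
    simp only [mpTrace]
    split_ifs with hα
    · obtain ⟨hne, hz⟩ := (hc k).exists_beta_of_cfire hD (hvalid k) (hfire k) hα
      exact (reflTransGen_mpTrace hD hvalid hfire hc k).trans
        (reflTransGen_mpStep_update_toward hne hz)
    · exact reflTransGen_mpTrace hD hvalid hfire hc k

theorem le_of_forall_not_fires
    (hfire : ∀ k, cfire (encNet n) (tk k) (ak k) (ms k) (ms (k + 1)))
    {K : ℕ} {i : Fin n} {s : Bool}
    (h : ∀ k ≥ K, ¬((tk k).i = i ∧ (tk k).s = s ∧ 0 < ak k)) :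
    ∀ k ≥ K, ms k (i, s) ≤ ms K (i, s) := by
  intro k hk
  induction k, hk using Nat.le_induction with
  | base => exact le_rfl
  | succ k hk ih => exact (encNet_cfire_le (hfire k) (h k hk)).trans ih

theorem eventually_mpTrace_settled
    (hfire : ∀ k, cfire (encNet n) (tk k) (ak k) (ms k) (ms (k + 1)))
    (hc : ∀ k, Compatible (mpTrace v₀ tk ak k) (ms k)) {y : Config n}
    (hlim : ∀ i, Tendsto (fun k => ms k (i, y i)) atTop (nhds 1)) (i : Fin n) :
    ∀ᶠ K in atTop, (∀ k, mpTrace v₀ tk ak k i = .b (y i)) ∨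
      (∀ v, mpTrace v₀ tk ak K i ≠ .b v) ∧ (mpTrace v₀ tk ak K i = .toward (y i) ∨
        ∃ k ≥ K, (tk k).i = i ∧ (tk k).s = y i ∧ 0 < ak k) := by
  by_cases hb : ∃ᶠ k in atTop, ∃ v, mpTrace v₀ tk ak k i = .b v
  · obtain ⟨v, hv⟩ := exists_forall_mpTrace_eq_b hb
    obtain rfl : v = y i := by
      by_contra hne
      have hzero : ∀ k, ms k (i, y i) = 0 := fun k => by
        simpa [Bool.eq_not.mpr (Ne.symm hne)] using (hc k).eq_zero_of_eq_b (hv k)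
      linarith [le_of_tendsto' (hlim i) (fun k => (hzero k).le)]
    exact .of_forall fun _ => .inl hv
  simp only [not_frequently, not_exists] at hb
  by_cases hfires : ∃ᶠ k in atTop, (tk k).i = i ∧ (tk k).s = y i ∧ 0 < ak k
  · exact hb.mono fun K hK => .inr ⟨hK, .inr (frequently_atTop.mp hfires K)⟩
  rw [not_frequently] at hfires
  obtain ⟨K₁, hK₁⟩ := eventually_atTop.mp (hb.and hfires)
  refine eventually_atTop.mpr ⟨K₁, fun K hK => .inr ⟨(hK₁ K hK).1, .inl ?_⟩⟩
  obtain ⟨s, hs⟩ := MPV.exists_eq_toward (hK₁ K hK).1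
  rw [hs]
  by_contra hne
  obtain rfl : s = !y i := Bool.eq_not.mpr fun h => hne (h ▸ rfl)
  have hlt : ms K (i, y i) < 1 := by simpa using (hc K).lt_one_of_eq_toward i _ hs
  have hle := le_of_forall_not_fires hfire (fun k hk => (hK₁ k (hK.trans hk)).2)
  linarith [le_of_tendsto (hlim i) (eventually_atTop.mpr ⟨K, hle⟩)]

theorem exists_reflTransGen_mpTrace_toMP {f : BN n} {D : Fin n → Bool → Set (Clause n)}
    (hD : IsDNF f D) (hvalid : ∀ k, validT D (tk k))
    (hfire : ∀ k, cfire (encNet n) (tk k) (ak k) (ms k) (ms (k + 1)))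
    (hc : ∀ k, Compatible (mpTrace v₀ tk ak k) (ms k)) {y : Config n}
    (hlim : ∀ i, Tendsto (fun k => ms k (i, y i)) atTop (nhds 1)) :
    ∃ K, ReflTransGen (mpStep f) (mpTrace v₀ tk ak K) (toMP y) := by
  obtain ⟨K, hK⟩ := (eventually_all.mpr (eventually_mpTrace_settled hfire hc hlim)).exists
  refine ⟨K, reflTransGen_mpStep_toMP fun i => ?_⟩
  rcases hK i with hb | ⟨hnb, hrest | ⟨k, hk, rfl, hs, hα⟩⟩
  · exact .inl (hb K)
  · exact .inr ⟨hnb, .inl hrest⟩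
  obtain ⟨-, z, hz, hfz⟩ := (hc k).exists_beta_of_cfire hD (hvalid k) (hfire k) hα
  have hbool : ∀ j u, mpTrace v₀ tk ak K j = .b u → mpTrace v₀ tk ak k j = .b u := by
    intro j u hu
    rcases hK j with hbj | ⟨hnbj, -⟩
    · rw [hbj k, ← hbj K, hu]
    · exact absurd hu (hnbj u)
  exact .inr ⟨hnb, .inr ⟨z, beta_subset_beta hbool hz, hs ▸ hfz⟩⟩

end Trace

/-- CPNs simulate MPBNs, backward direction: if ⟨y⟩ is
lim-reachable from ⟨x⟩ in the continuous Petri net N(f) (firing only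
transitions of the encoding), then y is MP-reachable from x. -/
theorem cpn_simulates_mpbn_backward {n : ℕ} (f : BN n)
    (D : Fin n → Bool → Set (Clause n)) (hD : IsDNF f D)
    (x y : Config n)
    (h : climReachG (encNet n) (validT D) (canon (toMP x)) (canon (toMP y))) :
    mp f x y := by
  obtain ⟨ms, h₀, hstep, hlim⟩ := h
  choose tk hvalid ak hfire using hstep
  have hc := compatible_mpTrace hfire (h₀ ▸ compatible_canon (toMP x))
  have hlim_y : ∀ i, Tendsto (fun k => ms k (i, y i)) atTop (nhds 1) := fun i => by
    simpa [canon, toMP] using tendsto_pi_nhds.mp hlim (i, y i)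
  obtain ⟨K, hK⟩ := exists_reflTransGen_mpTrace_toMP hD hvalid hfire hc hlim_y
  exact (reflTransGen_mpTrace hD hvalid hfire hc K).trans hK
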